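/- arXiv:1310.1875 — 9 statements merged into one kernel-verified Lean document; each statement's English description precedes it below -/
import Mathlib

section
/- Let (c_mo, c_Δo, c_ηo, c_εo, c_mc, c_Δc, c_ηc, c_εc, c_po, c_pc, c_ι, c_ι⋆) be a scalar solution with c_po ≠ 0. Then every entry of the tuple is nonzero, c_po = 1 and c_pc = 1, and moreover c_mo·c_ηo = 1, c_Δo·c_εo = 1, c_mc·c_ηc = 1, c_Δc·c_εc = 1, c_ι·c_ηc = c_ηo, c_ι⋆·c_εc = c_εo, and c_εc·c_ηc = (c_ηo·c_εo)². -/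
/-- a scalar solution (to the sewing relations R1, R3, R10–R15,
R21–R24, R26, R27, R29, R30, R31) with `c_po ≠ 0` has all entries nonzero,
`c_po = c_pc = 1`, and the listed multiplicative relations hold. -/
theorem scalar_solution_po_ne_zero
    (cmo cΔo cηo cεo cmc cΔc cηc cεc cpo cpc cι cιs : ℂ)
    (hR1 : cmo * cηo = cpo)
    (hR3 : cΔo * cεo = cpo)
    (hR10 : cpo * cmo = cmo)
    (hR11 : cpo * cηo = cηo)
    (hR12 : cpo * cΔo = cΔo)
    (hR13 : cpo * cεo = cεo)
    (hR14 : cmc * cηc = cpc)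
    (hR15 : cΔc * cεc = cpc)
    (hR21 : cpc * cmc = cmc)
    (hR22 : cpc * cηc = cηc)
    (hR23 : cpc * cΔc = cΔc)
    (hR24 : cpc * cεc = cεc)
    (hR26 : cmo * cεo * cΔc * cηc * cι = cιs)
    (hR27 : cΔo * cηo * cmc * cεc * cιs = cι)
    (hR29 : cmc * cι = cι ^ 2 * cmo)
    (hR30 : cηc * cι = cηo)
    (hR31 : cι * cιs = cmo * cΔo)
    (hpo : cpo ≠ 0) :
    (cmo ≠ 0 ∧ cΔo ≠ 0 ∧ cηo ≠ 0 ∧ cεo ≠ 0 ∧ cmc ≠ 0 ∧ cΔc ≠ 0 ∧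
      cηc ≠ 0 ∧ cεc ≠ 0 ∧ cpo ≠ 0 ∧ cpc ≠ 0 ∧ cι ≠ 0 ∧ cιs ≠ 0) ∧
    cpo = 1 ∧ cpc = 1 ∧
    cmo * cηo = 1 ∧ cΔo * cεo = 1 ∧ cmc * cηc = 1 ∧ cΔc * cεc = 1 ∧
    cι * cηc = cηo ∧ cιs * cεc = cεo ∧
    cεc * cηc = (cηo * cεo) ^ 2 := by

  obtain ⟨hmo, hηo⟩ := mul_ne_zero_iff.mp (hR1.symm ▸ hpo)
  obtain ⟨hΔo, hεo⟩ := mul_ne_zero_iff.mp (hR3.symm ▸ hpo)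
  have hpo1 : cpo = 1 := mul_right_cancel₀ hmo (by rw [hR10, one_mul])
  have h30' : cηc * cι ≠ 0 := by rw [hR30]; exact hηo
  obtain ⟨hηc, hι⟩ := mul_ne_zero_iff.mp h30'
  have h31' : cι * cιs ≠ 0 := by rw [hR31]; exact mul_ne_zero hmo hΔo
  have hιs : cιs ≠ 0 := (mul_ne_zero_iff.mp h31').2
  have h26' : cmo * cεo * cΔc * cηc * cι ≠ 0 := by rw [hR26]; exact hιs
  have hΔc : cΔc ≠ 0 := by
    intro h; exact h26' (by rw [h]; ring)
  have h27' : cΔo * cηo * cmc * cεc * cιs ≠ 0 := by rw [hR27]; exact hι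
  have hmc : cmc ≠ 0 := by intro h; exact h27' (by rw [h]; ring)
  have hεc : cεc ≠ 0 := by intro h; exact h27' (by rw [h]; ring)
  have hpc : cpc ≠ 0 := by rw [← hR14]; exact mul_ne_zero hmc hηc
  have hpc1 : cpc = 1 := mul_right_cancel₀ hmc (by rw [hR21, one_mul])
  have h1 : cmo * cηo = 1 := hR1.trans hpo1
  have h2 : cΔo * cεo = 1 := hR3.trans hpo1
  have h3 : cmc * cηc = 1 := hR14.trans hpc1
  have h4 : cΔc * cεc = 1 := hR15.trans hpc1
  have hη : cι * cηc = cηo := by rw [mul_comm]; exact hR30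
  have hε : cιs * cεc = cεo := by
    calc cιs * cεc = cmo * (cηc * cι) * cεo * (cΔc * cεc) := by rw [← hR26]; ring
    _ = cmo * cηo * cεo * cpc := by rw [hR30, hR15]
    _ = cεo := by rw [h1, hpc1]; ring
  refine ⟨⟨hmo, hΔo, hηo, hεo, hmc, hΔc, hηc, hεc, hpo, hpc, hι, hιs⟩,
    hpo1, hpc1, h1, h2, h3, h4, hη, hε, ?_⟩
  calc cεc * cηc = (cmo * cηo) * (cΔo * cεo) * (cεc * cηc) := by rw [h1, h2]; ring
  _ = (cι * cιs) * (cηc * cεc) * (cηo * cεo) := by rw [hR31]; ring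
  _ = ((cι * cηc) * (cιs * cεc)) * (cηo * cεo) := by ring
  _ = (cηo * cεo) ^ 2 := by rw [hη, hε]; ring
end

section
/- Let (c_mo, c_Δo, c_ηo, c_εo, c_mc, c_Δc, c_ηc, c_εc, c_po, c_pc, c_ι, c_ι⋆) be a scalar solution with c_po = 0 and c_pc ≠ 0. Then c_mo = c_ηo = c_Δo = c_εo = 0, c_ι = c_ι⋆ = 0, c_pc = 1, and c_mc·c_ηc = 1 and c_Δc·c_εc = 1 (in particular c_mc, c_ηc, c_Δc, c_εc are all nonzero). -/
/-- a scalar solution with `c_po = 0` and `c_pc ≠ 0` has vanishing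
open sector, `c_ι = c_ι⋆ = 0`, `c_pc = 1` and invertible closed structure maps. -/
theorem scalar_solution_po_zero_pc_ne_zero
    (cmo cΔo cηo cεo cmc cΔc cηc cεc cpo cpc cι cιs : ℂ)
    (hR1 : cmo * cηo = cpo)
    (hR3 : cΔo * cεo = cpo)
    (hR10 : cpo * cmo = cmo)
    (hR11 : cpo * cηo = cηo)
    (hR12 : cpo * cΔo = cΔo)
    (hR13 : cpo * cεo = cεo)
    (hR14 : cmc * cηc = cpc)
    (hR15 : cΔc * cεc = cpc)
    (hR21 : cpc * cmc = cmc)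
    (hR22 : cpc * cηc = cηc)
    (hR23 : cpc * cΔc = cΔc)
    (hR24 : cpc * cεc = cεc)
    (hR26 : cmo * cεo * cΔc * cηc * cι = cιs)
    (hR27 : cΔo * cηo * cmc * cεc * cιs = cι)
    (hR29 : cmc * cι = cι ^ 2 * cmo)
    (hR30 : cηc * cι = cηo)
    (hR31 : cι * cιs = cmo * cΔo)
    (hpo : cpo = 0) (hpc : cpc ≠ 0) :
    cmo = 0 ∧ cηo = 0 ∧ cΔo = 0 ∧ cεo = 0 ∧ cι = 0 ∧ cιs = 0 ∧
    cpc = 1 ∧ cmc * cηc = 1 ∧ cΔc * cεc = 1 ∧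
    cmc ≠ 0 ∧ cηc ≠ 0 ∧ cΔc ≠ 0 ∧ cεc ≠ 0 := by
  subst hpo
  have hmo : cmo = 0 := by linear_combination -hR10
  have hηo : cηo = 0 := by linear_combination -hR11
  have hΔo : cΔo = 0 := by linear_combination -hR12
  have hεo : cεo = 0 := by linear_combination -hR13
  have hmc : cmc ≠ 0 := fun h => hpc (by rw [← hR14, h, zero_mul])
  have hηc : cηc ≠ 0 := fun h => hpc (by rw [← hR14, h, mul_zero])
  have hΔc : cΔc ≠ 0 := fun h => hpc (by rw [← hR15, h, zero_mul])
  have hεc : cεc ≠ 0 := fun h => hpc (by rw [← hR15, h, mul_zero])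
  have hι : cι = 0 := by
    have := hR30
    rw [hηo] at this
    exact (mul_eq_zero.mp this).resolve_left hηc
  have hιs : cιs = 0 := by rw [← hR26, hι, mul_zero]
  have hpc1 : cpc = 1 := by
    have h : cpc * cmc = 1 * cmc := by rw [hR21, one_mul]
    exact mul_right_cancel₀ hmc h
  refine ⟨hmo, hηo, hΔo, hεo, hι, hιs, hpc1, ?_, ?_, hmc, hηc, hΔc, hεc⟩
  · rw [hR14, hpc1]
  · rw [hR15, hpc1]
end

section
/- The map from the disjoint union PUnit ⊔ (ℂˣ × ℂˣ) ⊔ (ℂˣ × ℂˣ × ℂˣ) to ℂ¹² that sends the single point to the zero tuple, sends (α, β) to the tuple (c_mo, c_Δo, c_ηo, c_εo, c_mc, c_Δc, c_ηc, c_εc, c_po, c_pc, c_ι, c_ι⋆) = (0, 0, 0, 0, α⁻¹, β⁻¹, α, β, 0, 1, 0, 0), and sends (α, β, γ) to (α⁻¹, β⁻¹, α, β, (αβγ)⁻¹, γ·(αβ)⁻¹, αβγ, αβ·γ⁻¹, 1, 1, (βγ)⁻¹, γ·α⁻¹), is a bijection from PUnit ⊔ (ℂˣ × ℂˣ) ⊔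 (ℂˣ × ℂˣ × ℂˣ) onto the set of scalar solutions. -/
/-- The seventeen scalar sewing relations (R1, R3, R10–R15, R21–R24, R26, R27,
R29, R30, R31) on a tuple of twelve complex numbers
`(c_mo, c_Δo, c_ηo, c_εo, c_mc, c_Δc, c_ηc, c_εc, c_po, c_pc, c_ι, c_ι⋆)`. -/
def IsScalarSolution (cmo cΔo cηo cεo cmc cΔc cηc cεc cpo cpc cι cιs : ℂ) : Prop :=
  cmo * cηo = cpo ∧
  cΔo * cεo = cpo ∧
  cpo * cmo = cmo ∧
  cpo * cηo = cηo ∧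
  cpo * cΔo = cΔo ∧
  cpo * cεo = cεo ∧
  cmc * cηc = cpc ∧
  cΔc * cεc = cpc ∧
  cpc * cmc = cmc ∧
  cpc * cηc = cηc ∧
  cpc * cΔc = cΔc ∧
  cpc * cεc = cεc ∧
  cmo * cεo * cΔc * cηc * cι = cιs ∧
  cΔo * cηo * cmc * cεc * cιs = cι ∧
  cmc * cι = cι ^ 2 * cmo ∧
  cηc * cι = cηo ∧
  cι * cιs = cmo * cΔo

/-- The set of scalar solutions, as a subset of `ℂ¹²`. -/
def ScalarSolutions :
    Set (ℂ × ℂ × ℂ × ℂ × ℂ × ℂ × ℂ × ℂ × ℂ × ℂ × ℂ × ℂ) :=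
  {t | IsScalarSolution t.1 t.2.1 t.2.2.1 t.2.2.2.1 t.2.2.2.2.1 t.2.2.2.2.2.1
      t.2.2.2.2.2.2.1 t.2.2.2.2.2.2.2.1 t.2.2.2.2.2.2.2.2.1
      t.2.2.2.2.2.2.2.2.2.1 t.2.2.2.2.2.2.2.2.2.2.1 t.2.2.2.2.2.2.2.2.2.2.2}

/-- The parametrising map: the single point goes to the zero tuple, a pair
`(α, β)` of units to the purely closed solution, and a triple `(α, β, γ)` of
units to the generic solution. -/
noncomputable def solutionParam :
    PUnit ⊕ (ℂˣ × ℂˣ) ⊕ (ℂˣ × ℂˣ × ℂˣ) →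
      ℂ × ℂ × ℂ × ℂ × ℂ × ℂ × ℂ × ℂ × ℂ × ℂ × ℂ × ℂ
  | Sum.inl _ => (0, 0, 0, 0, 0, 0, 0, 0, 0, 0, 0, 0)
  | Sum.inr (Sum.inl (α, β)) =>
      (0, 0, 0, 0, (α : ℂ)⁻¹, (β : ℂ)⁻¹, (α : ℂ), (β : ℂ), 0, 1, 0, 0)
  | Sum.inr (Sum.inr (α, β, γ)) =>
      ((α : ℂ)⁻¹, (β : ℂ)⁻¹, (α : ℂ), (β : ℂ),
        ((α : ℂ) * (β : ℂ) * (γ : ℂ))⁻¹,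
        (γ : ℂ) * ((α : ℂ) * (β : ℂ))⁻¹,
        (α : ℂ) * (β : ℂ) * (γ : ℂ),
        (α : ℂ) * (β : ℂ) * (γ : ℂ)⁻¹,
        1, 1, ((β : ℂ) * (γ : ℂ))⁻¹, (γ : ℂ) * (α : ℂ)⁻¹)

set_option maxHeartbeats 1000000 in
/-- `solutionParam` is a bijection from
`PUnit ⊔ (ℂˣ × ℂˣ) ⊔ (ℂˣ × ℂˣ × ℂˣ)` onto the set of scalar solutions. -/
theorem solutionParam_bijOn :
    Set.BijOn solutionParam Set.univ ScalarSolutions := by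
  refine ⟨?_, ?_, ?_⟩
  · -- MapsTo
    rintro (⟨⟩ | ⟨α, β⟩ | ⟨α, β, γ⟩) -
    · simp [solutionParam, ScalarSolutions, IsScalarSolution]
    · have hα := α.ne_zero; have hβ := β.ne_zero
      simp only [solutionParam, ScalarSolutions, IsScalarSolution, Set.mem_setOf_eq]
      refine ⟨?_,?_,?_,?_,?_,?_,?_,?_,?_,?_,?_,?_,?_,?_,?_,?_,?_⟩ <;> simp [hα, hβ]
    · have hα := α.ne_zero; have hβ := β.ne_zero; have hγ := γ.ne_zero
      simp only [solutionParam, ScalarSolutions, IsScalarSolution, Set.mem_setOf_eq]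
      refine ⟨?_,?_,?_,?_,?_,?_,?_,?_,?_,?_,?_,?_,?_,?_,?_,?_,?_⟩ <;>
        field_simp <;> ring
  · -- InjOn
    rintro (⟨⟩ | ⟨α, β⟩ | ⟨α, β, γ⟩) - (⟨⟩ | ⟨α', β'⟩ | ⟨α', β', γ'⟩) - h <;>
      simp only [solutionParam, Prod.mk.injEq] at h
    · rfl
    · exact absurd h (by norm_num)
    · exact absurd h (by norm_num)
    · exact absurd h (by norm_num)
    · obtain ⟨-, -, -, -, -, -, h7, h8, -⟩ := h
      simp only [Sum.inr.injEq, Sum.inl.injEq, Prod.mk.injEq]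
      exact ⟨Units.ext h7, Units.ext h8⟩
    · exact absurd h (by norm_num)
    · exact absurd h (by norm_num)
    · exact absurd h (by norm_num)
    · obtain ⟨-, -, h3, h4, -, -, -, -, -, -, -, h12⟩ := h
      simp only [Sum.inr.injEq, Prod.mk.injEq]
      refine ⟨Units.ext h3, Units.ext h4, Units.ext ?_⟩
      have := inv_ne_zero α.ne_zero
      rw [h3] at h12
      exact mul_right_cancel₀ (inv_ne_zero α'.ne_zero) h12
  · -- SurjOn
    rintro ⟨a, b, c, d, e, f, g, hh, i, j, k, l⟩ hsol
    simp only [ScalarSolutions, IsScalarSolution, Set.mem_setOf_eq] at hsol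
    obtain ⟨h1, h2, h3, h4, h5, h6, h7, h8, h9, h10, h11, h12, h13, h14, h15, h16, h17⟩ := hsol
    have hio : i * (i - 1) = 0 := by linear_combination c * h3 - i * h1 + h1
    have hjo : j * (j - 1) = 0 := by linear_combination g * h9 - j * h7 + h7
    rcases mul_eq_zero.mp hio with hi | hi
    · subst hi
      obtain rfl : a = 0 := by linear_combination -h3
      obtain rfl : c = 0 := by linear_combination -h4
      obtain rfl : b = 0 := by linear_combination -h5
      obtain rfl : d = 0 := by linear_combination -h6
      obtain rfl : l = 0 := by linear_combination -h13
      obtain rfl : k = 0 := by linear_combination -h14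
      rcases mul_eq_zero.mp hjo with hj | hj
      · subst hj
        obtain rfl : e = 0 := by linear_combination -h9
        obtain rfl : g = 0 := by linear_combination -h10
        obtain rfl : f = 0 := by linear_combination -h11
        obtain rfl : hh = 0 := by linear_combination -h12
        exact ⟨Sum.inl PUnit.unit, trivial, rfl⟩
      · obtain rfl : j = 1 := by linear_combination hj
        have hg : g ≠ 0 := right_ne_zero_of_mul_eq_one h7
        have hhh : hh ≠ 0 := right_ne_zero_of_mul_eq_one h8
        obtain rfl : e = g⁻¹ := eq_inv_of_mul_eq_one_left h7
        obtain rfl : f = hh⁻¹ := eq_inv_of_mul_eq_one_left h8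
        exact ⟨Sum.inr (Sum.inl (Units.mk0 g hg, Units.mk0 hh hhh)), trivial, by
          simp [solutionParam]⟩
    · obtain rfl : i = 1 := by linear_combination hi
      have hc : c ≠ 0 := right_ne_zero_of_mul_eq_one h1
      have ha0 : a ≠ 0 := left_ne_zero_of_mul_eq_one h1
      have hd : d ≠ 0 := right_ne_zero_of_mul_eq_one h2
      have hgk : g * k ≠ 0 := by rw [h16]; exact hc
      obtain ⟨hg, hk0⟩ := mul_ne_zero_iff.mp hgk
      have hek : e * k ≠ 0 := by
        rw [h15]; exact mul_ne_zero (pow_ne_zero 2 hk0) ha0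
      have he0 : e ≠ 0 := (mul_ne_zero_iff.mp hek).1
      obtain rfl : j = 1 := by
        rcases mul_eq_zero.mp hjo with hj | hj
        · exact absurd (hj ▸ h7) (mul_ne_zero he0 hg)
        · linear_combination hj
      obtain rfl : a = c⁻¹ := eq_inv_of_mul_eq_one_left h1
      obtain rfl : b = d⁻¹ := eq_inv_of_mul_eq_one_left h2
      obtain rfl : e = g⁻¹ := eq_inv_of_mul_eq_one_left h7
      have hf0 : f ≠ 0 := left_ne_zero_of_mul_eq_one h8
      obtain rfl : hh = f⁻¹ := eq_inv_of_mul_eq_one_right h8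
      obtain rfl : k = c * g⁻¹ := by
        field_simp
        linear_combination h16
      obtain rfl : l = d * f := by
        field_simp at h13
        linear_combination -h13
      obtain rfl : f = g * (c * d)⁻¹ * (c * d)⁻¹ := by
        field_simp at h17 ⊢
        linear_combination h17
      refine ⟨Sum.inr (Sum.inr (Units.mk0 c hc, Units.mk0 d hd,
        Units.mk0 (g * (c * d)⁻¹) (mul_ne_zero hg (inv_ne_zero (mul_ne_zero hc hd))))),
        trivial, ?_⟩
      clear * - hc hd hg
      simp only [solutionParam, Units.val_mk0, Prod.mk.injEq]
      refine ⟨?_, ?_, ?_, ?_, ?_, ?_, ?_, ?_, ?_, ?_, ?_, ?_⟩ <;>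
        first
        | trivial
        | (field_simp; try ring)
end

section
/- Let B be an object of C and let m : B⊗B → B, Δ : B → B⊗B, ε : B → 𝟙, p : B → B be morphisms such that ρ_B∘(id_B⊗ε)∘Δ = p (relation R4), (m⊗id_B)∘α⁻¹_{B,B,B}∘(id_B⊗Δ) = Δ∘m (relation R8), and p∘m = m (relation R10). Then m∘(id_B⊗p) = m. -/
open CategoryTheory MonoidalCategory

/-- relations R4, R8 and R10 imply the right absorption identity
`m∘(id_B⊗p) = m`. -/
theorem mul_absorbs_propagator_right {C : Type*} [Category C] [MonoidalCategory C]
    (B : C) (m : B ⊗ B ⟶ B) (Δ : B ⟶ B ⊗ B) (ε : B ⟶ 𝟙_ C) (p : B ⟶ B)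
    (hR4 : Δ ≫ (𝟙 B ⊗ₘ ε) ≫ (ρ_ B).hom = p)
    (hR8 : (𝟙 B ⊗ₘ Δ) ≫ (α_ B B B).inv ≫ (m ⊗ₘ 𝟙 B) = m ≫ Δ)
    (hR10 : m ≫ p = m) :
    (𝟙 B ⊗ₘ p) ≫ m = m := by
  have key : (𝟙 B ⊗ₘ p) ≫ m
      = (𝟙 B ⊗ₘ Δ) ≫ (α_ B B B).inv ≫ (m ⊗ₘ 𝟙 B) ≫ (𝟙 B ⊗ₘ ε) ≫ (ρ_ B).hom := by
    rw [← hR4]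
    simp only [← id_tensorHom, ← tensorHom_id, tensorHom_comp_tensorHom_assoc, tensorHom_comp_tensorHom,
      Category.comp_id, Category.id_comp]
    simp only [id_tensorHom, tensorHom_id]
    simp only [MonoidalCategory.whiskerLeft_comp, whisker_exchange_assoc,
      MonoidalCategory.tensorHom_def, Category.assoc]
    rw [MonoidalCategory.whiskerLeft_rightUnitor_assoc,
      MonoidalCategory.associator_inv_naturality_right_assoc,
      ← MonoidalCategory.rightUnitor_naturality, ← MonoidalCategory.whisker_exchange_assoc]
  rw [key, reassoc_of% hR8, hR4, hR10]
end

section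
/- Let B be an object of C and let m : B⊗B → B, η : 𝟙 → B, Δ : B → B⊗B, ε : B → 𝟙, p : B → B be morphisms such that: m∘(η⊗id_B) = p∘λ_B (R1); m∘(id_B⊗η) = p∘ρ_B (R2); λ_B∘(ε⊗id_B)∘Δ = p (R3); ρ_B∘(id_B⊗ε)∘Δ = p (R4); (m⊗id_B)∘α⁻¹_{B,B,B}∘(id_B⊗Δ) = Δ∘m (R8); (id_B⊗m)∘α_{B,B,B}∘(Δ⊗id_B) = Δ∘m (R9); p∘m = m (R10); and Δ∘p = Δ (R12). Then the following absorption identities hold: m∘(p⊗id_B) = m, m∘(id_B⊗p) = m, (p⊗id_B)∘Δ = Δ, and (id_B⊗p)∘Δ = Δ. -/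
open CategoryTheory MonoidalCategory

/-- relations R1–R4, R8, R9, R10 and R12 imply all four absorption
identities of the open propagator `p` with respect to `m` and `Δ`. -/
theorem absorption_identities {C : Type*} [Category C] [MonoidalCategory C]
    (B : C) (m : B ⊗ B ⟶ B) (η : 𝟙_ C ⟶ B) (Δ : B ⟶ B ⊗ B) (ε : B ⟶ 𝟙_ C)
    (p : B ⟶ B)
    (hR1 : (η ⊗ₘ 𝟙 B) ≫ m = (λ_ B).hom ≫ p)
    (hR2 : (𝟙 B ⊗ₘ η) ≫ m = (ρ_ B).hom ≫ p)
    (hR3 : Δ ≫ (ε ⊗ₘ 𝟙 B) ≫ (λ_ B).hom = p)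
    (hR4 : Δ ≫ (𝟙 B ⊗ₘ ε) ≫ (ρ_ B).hom = p)
    (hR8 : (𝟙 B ⊗ₘ Δ) ≫ (α_ B B B).inv ≫ (m ⊗ₘ 𝟙 B) = m ≫ Δ)
    (hR9 : (Δ ⊗ₘ 𝟙 B) ≫ (α_ B B B).hom ≫ (𝟙 B ⊗ₘ m) = m ≫ Δ)
    (hR10 : m ≫ p = m)
    (hR12 : p ≫ Δ = Δ) :
    (p ⊗ₘ 𝟙 B) ≫ m = m ∧ (𝟙 B ⊗ₘ p) ≫ m = m ∧
    Δ ≫ (p ⊗ₘ 𝟙 B) = Δ ∧ Δ ≫ (𝟙 B ⊗ₘ p) = Δ := by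
  simp only [id_tensorHom, tensorHom_id] at hR1 hR2 hR3 hR4 hR8 hR9 ⊢
  refine ⟨?_, ?_, ?_, ?_⟩
  · -- (p ▷ B) ≫ m = m, from hR9 postcomposed with (ε ▷ B) ≫ λ
    calc p ▷ B ≫ m
        = (Δ ≫ ε ▷ B ≫ (λ_ B).hom) ▷ B ≫ m := by rw [hR3]
      _ = Δ ▷ B ≫ (α_ B B B).hom ≫ (α_ B B B).inv ≫
            ((ε ▷ B ≫ (λ_ B).hom) ▷ B) ≫ m := by
          simp [comp_whiskerRight]
      _ = Δ ▷ B ≫ (α_ B B B).hom ≫ ε ▷ (B ⊗ B) ≫ (λ_ (B ⊗ B)).hom ≫ m := by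
          rw [leftUnitor_tensor_hom]
          simp only [comp_whiskerRight, Category.assoc,
            associator_inv_naturality_left_assoc]
      _ = Δ ▷ B ≫ (α_ B B B).hom ≫ ε ▷ (B ⊗ B) ≫ 𝟙_ C ◁ m ≫ (λ_ B).hom := by
          rw [leftUnitor_naturality]
      _ = Δ ▷ B ≫ (α_ B B B).hom ≫ B ◁ m ≫ ε ▷ B ≫ (λ_ B).hom := by
          rw [← whisker_exchange_assoc]
      _ = m ≫ Δ ≫ ε ▷ B ≫ (λ_ B).hom := by
          simp only [← Category.assoc]; rw [← Category.assoc] at hR9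
          rw [hR9]
      _ = m ≫ p := by rw [hR3]
      _ = m := hR10
  · -- (B ◁ p) ≫ m = m, from hR8 postcomposed with (B ◁ ε) ≫ ρ
    calc B ◁ p ≫ m
        = B ◁ (Δ ≫ B ◁ ε ≫ (ρ_ B).hom) ≫ m := by rw [hR4]
      _ = B ◁ Δ ≫ (α_ B B B).inv ≫ (α_ B B B).hom ≫
            B ◁ (B ◁ ε) ≫ B ◁ (ρ_ B).hom ≫ m := by
          simp [MonoidalCategory.whiskerLeft_comp]
      _ = B ◁ Δ ≫ (α_ B B B).inv ≫ (B ⊗ B) ◁ ε ≫ (ρ_ (B ⊗ B)).hom ≫ m := by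
          rw [rightUnitor_tensor_hom]
          simp only [MonoidalCategory.whiskerLeft_comp, Category.assoc,
            ← associator_inv_naturality_right_assoc]
          simp
      _ = B ◁ Δ ≫ (α_ B B B).inv ≫ (B ⊗ B) ◁ ε ≫ m ▷ 𝟙_ C ≫ (ρ_ B).hom := by
          rw [rightUnitor_naturality]
      _ = B ◁ Δ ≫ (α_ B B B).inv ≫ m ▷ B ≫ B ◁ ε ≫ (ρ_ B).hom := by
          rw [whisker_exchange_assoc]
      _ = m ≫ Δ ≫ B ◁ ε ≫ (ρ_ B).hom := by
          simp only [← Category.assoc]; rw [← Category.assoc] at hR8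
          rw [hR8]
      _ = m ≫ p := by rw [hR4]
      _ = m := hR10
  · -- Δ ≫ (p ▷ B) = Δ, from hR8 precomposed with (η ▷ B)
    rw [← cancel_epi (λ_ B).hom]
    calc (λ_ B).hom ≫ Δ ≫ p ▷ B
        = 𝟙_ C ◁ Δ ≫ (λ_ (B ⊗ B)).hom ≫ p ▷ B := by
          rw [leftUnitor_naturality_assoc]
      _ = 𝟙_ C ◁ Δ ≫ (α_ (𝟙_ C) B B).inv ≫ ((λ_ B).hom ≫ p) ▷ B := by
          rw [leftUnitor_tensor_hom]; simp [comp_whiskerRight]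
      _ = 𝟙_ C ◁ Δ ≫ (α_ (𝟙_ C) B B).inv ≫ (η ▷ B ≫ m) ▷ B := by rw [← hR1]
      _ = 𝟙_ C ◁ Δ ≫ η ▷ (B ⊗ B) ≫ (α_ B B B).inv ≫ m ▷ B := by
          simp only [comp_whiskerRight, Category.assoc,
            associator_inv_naturality_left_assoc]
      _ = η ▷ B ≫ B ◁ Δ ≫ (α_ B B B).inv ≫ m ▷ B := by
          rw [whisker_exchange_assoc]
      _ = η ▷ B ≫ m ≫ Δ := by rw [hR8]
      _ = (λ_ B).hom ≫ p ≫ Δ := by rw [reassoc_of% hR1]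
      _ = (λ_ B).hom ≫ Δ := by rw [hR12]
  · -- Δ ≫ (B ◁ p) = Δ, from hR9 precomposed with (B ◁ η)
    rw [← cancel_epi (ρ_ B).hom]
    calc (ρ_ B).hom ≫ Δ ≫ B ◁ p
        = Δ ▷ 𝟙_ C ≫ (ρ_ (B ⊗ B)).hom ≫ B ◁ p := by
          rw [rightUnitor_naturality_assoc]
      _ = Δ ▷ 𝟙_ C ≫ (α_ B B (𝟙_ C)).hom ≫ B ◁ ((ρ_ B).hom ≫ p) := by
          rw [rightUnitor_tensor_hom]; simp [MonoidalCategory.whiskerLeft_comp]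
      _ = Δ ▷ 𝟙_ C ≫ (α_ B B (𝟙_ C)).hom ≫ B ◁ (B ◁ η ≫ m) := by rw [← hR2]
      _ = Δ ▷ 𝟙_ C ≫ (B ⊗ B) ◁ η ≫ (α_ B B B).hom ≫ B ◁ m := by
          simp only [MonoidalCategory.whiskerLeft_comp, Category.assoc,
            associator_naturality_right_assoc]
      _ = B ◁ η ≫ Δ ▷ B ≫ (α_ B B B).hom ≫ B ◁ m := by
          rw [← whisker_exchange_assoc]
      _ = B ◁ η ≫ m ≫ Δ := by rw [hR9]
      _ = (ρ_ B).hom ≫ p ≫ Δ := by rw [reassoc_of% hR2]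
      _ = (ρ_ B).hom ≫ Δ := by rw [hR12]
end

section
/- Let A and B be objects of C and let m : A⊗A → A, ε : A → 𝟙, η : 𝟙 → B, Δ : B → B⊗B, ι : B → A, q : B → B be morphisms such that (id_B⊗q)∘Δ = Δ. Define ι⋆ : A → B as the composite ι⋆ = λ_B ∘ ((ε∘m)⊗id_B) ∘ ((id_A⊗ι)⊗id_B) ∘ α⁻¹_{A,B,B} ∘ (id_A⊗(Δ∘η)) ∘ ρ_A⁻¹. Then q∘ι⋆ = ι⋆. -/
open CategoryTheory MonoidalCategory

/-- if `(id_B⊗q)∘Δ = Δ` and `ι⋆` is defined from `ι` by the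
composite of relation R26, then `q∘ι⋆ = ι⋆`. -/
theorem iota_star_absorbs_closed_propagator {C : Type*} [Category C]
    [MonoidalCategory C]
    (A B : C) (m : A ⊗ A ⟶ A) (ε : A ⟶ 𝟙_ C) (η : 𝟙_ C ⟶ B) (Δ : B ⟶ B ⊗ B)
    (ι : B ⟶ A) (q : B ⟶ B)
    (hq : Δ ≫ (𝟙 B ⊗ₘ q) = Δ)
    (ιs : A ⟶ B)
    (hιs : ιs = (ρ_ A).inv ≫ (𝟙 A ⊗ₘ (η ≫ Δ)) ≫ (α_ A B B).inv ≫
      ((𝟙 A ⊗ₘ ι) ⊗ₘ 𝟙 B) ≫ ((m ≫ ε) ⊗ₘ 𝟙 B) ≫ (λ_ B).hom) :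
    ιs ≫ q = ιs := by
  subst hιs
  simp only [Category.assoc, ← leftUnitor_naturality]
  slice_lhs 5 6 =>
    rw [show ((m ≫ ε) ⊗ₘ 𝟙 B) ≫ (𝟙_ C ◁ q) = ((A ⊗ A) ◁ q) ≫ ((m ≫ ε) ⊗ₘ 𝟙 B) by
      simp only [MonoidalCategory.tensorHom_def, MonoidalCategory.whiskerLeft_id, Category.comp_id, Category.id_comp, Category.assoc]
      rw [← whisker_exchange]]
  slice_lhs 4 5 =>
    rw [show ((𝟙 A ⊗ₘ ι) ⊗ₘ 𝟙 B) ≫ ((A ⊗ A) ◁ q) = ((A ⊗ B) ◁ q) ≫ ((𝟙 A ⊗ₘ ι) ⊗ₘ 𝟙 B) by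
      simp only [MonoidalCategory.tensorHom_def, MonoidalCategory.whiskerLeft_id, Category.comp_id, Category.id_comp, Category.assoc, id_tensorHom]
      rw [← whisker_exchange]]
  slice_lhs 3 4 =>
    rw [show (α_ A B B).inv ≫ ((A ⊗ B) ◁ q) = (A ◁ (B ◁ q)) ≫ (α_ A B B).inv by simp]
  slice_lhs 2 3 =>
    rw [show (𝟙 A ⊗ₘ (η ≫ Δ)) ≫ (A ◁ (B ◁ q)) = (𝟙 A ⊗ₘ (η ≫ Δ)) by
      have h2 : Δ ≫ (B ◁ q) = Δ := by simpa [id_tensorHom] using hq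
      simp only [id_tensorHom, ← MonoidalCategory.whiskerLeft_comp, Category.assoc, h2]]
  simp only [Category.assoc]
end

section
/- Let B be an object of C and let f_mo : B⊗B → B, f_ηo : 𝟙 → B, f_Δo : B → B⊗B, f_εo : B → 𝟙, f_po : B → B be morphisms satisfying: f_mo∘(f_ηo⊗id_B) = f_po∘λ_B (R1); f_mo∘(id_B⊗f_ηo) = f_po∘ρ_B (R2); λ_B∘(f_εo⊗id_B)∘f_Δo = f_po (R3); ρ_B∘(id_B⊗f_εo)∘f_Δo = f_po (R4); f_mo∘(f_mo⊗id_B) = f_mo∘(id_B⊗f_mo)∘α_{B,B,B} (R6); (f_Δo⊗id_B)∘f_Δo = α⁻¹_{B,B,B}∘(id_B⊗f_Δo)∘f_Δo (R7); (f_mo⊗id_B)∘α⁻¹_{B,B,B}∘(id_B⊗f_Δo) = f_Δo∘f_mo (R8); (id_B⊗f_mo)∘α_{B,B,B}∘(f_Δo⊗id_B) = f_Δo∘f_mo (R9); f_po∘f_mo = f_mo (R10); f_po∘f_ηo = f_ηo (R11); f_Δo∘f_po = f_Δo (R12); f_εo∘f_po = f_εo (R13). Let (A, e, r) be a retract of B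 with respect to f_po, and define m := r∘f_mo∘(e⊗e) : A⊗A → A, η := r∘f_ηo : 𝟙 → A, Δ := (r⊗r)∘f_Δo∘e : A → A⊗A, ε := f_εo∘e : A → 𝟙. Then (A, m, η, Δ, ε) is a Frobenius algebra in C, i.e.: m∘(η⊗id_A) = λ_A and m∘(id_A⊗η) = ρ_A (unit laws); m∘(m⊗id_A) = m∘(id_A⊗m)∘α_{A,A,A} (associativity); λ_A∘(ε⊗id_A)∘Δ = id_A and ρ_A∘(id_A⊗ε)∘Δ = id_A (counit laws); (Δ⊗id_A)∘Δ = α⁻¹_{A,A,A}∘(id_A⊗Δ)∘Δ (coassociativity); and (m⊗id_A)∘α⁻¹_{A,A,A}∘(id_A⊗Δ) = Δ∘m = (id_A⊗m)∘α_{A,A,A}∘(Δ⊗id_A) (Frobenius condition). -/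
open CategoryTheory MonoidalCategory

set_option maxHeartbeats 1000000

/-- given morphisms on `B` satisfying the open sewing relations
R1–R4, R6–R13, and a retract `(A, e, r)` of `B` with respect to the idempotent
`f_po`, the induced morphisms `m, η, Δ, ε` on `A` form a Frobenius algebra. -/
theorem retract_frobenius {C : Type*} [Category C] [MonoidalCategory C]
    (A B : C)
    (fmo : B ⊗ B ⟶ B) (fηo : 𝟙_ C ⟶ B) (fΔo : B ⟶ B ⊗ B) (fεo : B ⟶ 𝟙_ C)
    (fpo : B ⟶ B)
    (hR1 : (fηo ⊗ₘ 𝟙 B) ≫ fmo = (λ_ B).hom ≫ fpo)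
    (hR2 : (𝟙 B ⊗ₘ fηo) ≫ fmo = (ρ_ B).hom ≫ fpo)
    (hR3 : fΔo ≫ (fεo ⊗ₘ 𝟙 B) ≫ (λ_ B).hom = fpo)
    (hR4 : fΔo ≫ (𝟙 B ⊗ₘ fεo) ≫ (ρ_ B).hom = fpo)
    (hR6 : (fmo ⊗ₘ 𝟙 B) ≫ fmo = (α_ B B B).hom ≫ (𝟙 B ⊗ₘ fmo) ≫ fmo)
    (hR7 : fΔo ≫ (fΔo ⊗ₘ 𝟙 B) = fΔo ≫ (𝟙 B ⊗ₘ fΔo) ≫ (α_ B B B).inv)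
    (hR8 : (𝟙 B ⊗ₘ fΔo) ≫ (α_ B B B).inv ≫ (fmo ⊗ₘ 𝟙 B) = fmo ≫ fΔo)
    (hR9 : (fΔo ⊗ₘ 𝟙 B) ≫ (α_ B B B).hom ≫ (𝟙 B ⊗ₘ fmo) = fmo ≫ fΔo)
    (hR10 : fmo ≫ fpo = fmo)
    (hR11 : fηo ≫ fpo = fηo)
    (hR12 : fpo ≫ fΔo = fΔo)
    (hR13 : fpo ≫ fεo = fεo)
    (e : A ⟶ B) (r : B ⟶ A)
    (her : r ≫ e = fpo) (hre : e ≫ r = 𝟙 A)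
    (m : A ⊗ A ⟶ A) (η : 𝟙_ C ⟶ A) (Δ : A ⟶ A ⊗ A) (ε : A ⟶ 𝟙_ C)
    (hm : m = (e ⊗ₘ e) ≫ fmo ≫ r)
    (hη : η = fηo ≫ r)
    (hΔ : Δ = e ≫ fΔo ≫ (r ⊗ₘ r))
    (hε : ε = e ≫ fεo) :
    (η ⊗ₘ 𝟙 A) ≫ m = (λ_ A).hom ∧
    (𝟙 A ⊗ₘ η) ≫ m = (ρ_ A).hom ∧
    (m ⊗ₘ 𝟙 A) ≫ m = (α_ A A A).hom ≫ (𝟙 A ⊗ₘ m) ≫ m ∧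
    Δ ≫ (ε ⊗ₘ 𝟙 A) ≫ (λ_ A).hom = 𝟙 A ∧
    Δ ≫ (𝟙 A ⊗ₘ ε) ≫ (ρ_ A).hom = 𝟙 A ∧
    Δ ≫ (Δ ⊗ₘ 𝟙 A) = Δ ≫ (𝟙 A ⊗ₘ Δ) ≫ (α_ A A A).inv ∧
    (𝟙 A ⊗ₘ Δ) ≫ (α_ A A A).inv ≫ (m ⊗ₘ 𝟙 A) = m ≫ Δ ∧
    (Δ ⊗ₘ 𝟙 A) ≫ (α_ A A A).hom ≫ (𝟙 A ⊗ₘ m) = m ≫ Δ := by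

  subst hm hη hΔ hε
  have hpe : e ≫ fpo = e := by rw [← her, ← Category.assoc, hre, Category.id_comp]
  have hpr : fpo ≫ r = r := by rw [← her, Category.assoc, hre, Category.comp_id]
  have hfpo1 : fpo = (λ_ B).inv ≫ (fηo ⊗ₘ 𝟙 B) ≫ fmo := by rw [hR1]; simp
  have hfpo2 : fpo = (ρ_ B).inv ≫ (𝟙 B ⊗ₘ fηo) ≫ fmo := by rw [hR2]; simp
  have Pm1 : (fpo ⊗ₘ 𝟙 B) ≫ fmo = fmo := by
    conv_lhs => rw [hfpo1]
    rw [comp_tensor_id, comp_tensor_id, Category.assoc, Category.assoc,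
      hR6, associator_naturality_assoc]
    have h1 : (fηo ⊗ₘ 𝟙 B ⊗ₘ 𝟙 B) ≫ (𝟙 B ⊗ₘ fmo) = (𝟙 (𝟙_ C) ⊗ₘ fmo) ≫ (fηo ⊗ₘ 𝟙 B) := by
      rw [tensorHom_comp_tensorHom, tensorHom_comp_tensorHom]; simp
    rw [reassoc_of% h1, hR1, id_tensorHom, leftUnitor_naturality_assoc,
      leftUnitor_tensor_hom]
    simp [hR10, tensorHom_id]
  have Pm2 : (𝟙 B ⊗ₘ fpo) ≫ fmo = fmo := by
    conv_lhs => rw [hfpo2]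
    rw [id_tensor_comp, id_tensor_comp, Category.assoc, Category.assoc]
    have hR6' : (𝟙 B ⊗ₘ fmo) ≫ fmo = (α_ B B B).inv ≫ (fmo ⊗ₘ 𝟙 B) ≫ fmo := by
      rw [hR6]; simp
    rw [hR6', associator_inv_naturality_assoc]
    have h2 : ((𝟙 B ⊗ₘ 𝟙 B) ⊗ₘ fηo) ≫ (fmo ⊗ₘ 𝟙 B) = (fmo ⊗ₘ 𝟙 (𝟙_ C)) ≫ (𝟙 B ⊗ₘ fηo) := by
      rw [tensorHom_comp_tensorHom, tensorHom_comp_tensorHom]; simp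
    rw [reassoc_of% h2, hR2, tensorHom_id, rightUnitor_naturality_assoc,
      rightUnitor_tensor_hom]
    simp [hR10, id_tensorHom]
  refine ⟨?_, ?_, ?_, ?_, ?_, ?_, ?_, ?_⟩
  · -- left unit
    have g1 : ((fηo ≫ r) ⊗ₘ 𝟙 A) ≫ (e ⊗ₘ e) = (𝟙 (𝟙_ C) ⊗ₘ e) ≫ (fηo ⊗ₘ 𝟙 B) := by
      rw [tensorHom_comp_tensorHom, tensorHom_comp_tensorHom]; simp [her, hR11]
    rw [reassoc_of% g1, reassoc_of% hR1, hpr, id_tensorHom, leftUnitor_naturality_assoc,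
      hre, Category.comp_id]
  · -- right unit
    have g2 : (𝟙 A ⊗ₘ (fηo ≫ r)) ≫ (e ⊗ₘ e) = (e ⊗ₘ 𝟙 (𝟙_ C)) ≫ (𝟙 B ⊗ₘ fηo) := by
      rw [tensorHom_comp_tensorHom, tensorHom_comp_tensorHom]; simp [her, hR11]
    rw [reassoc_of% g2, reassoc_of% hR2, hpr, tensorHom_id, rightUnitor_naturality_assoc,
      hre, Category.comp_id]
  · -- associativity
    have l3 : (((e ⊗ₘ e) ≫ fmo ≫ r) ⊗ₘ 𝟙 A) ≫ (e ⊗ₘ e) = ((e ⊗ₘ e) ⊗ₘ e) ≫ (fmo ⊗ₘ 𝟙 B) := by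
      rw [tensorHom_comp_tensorHom, tensorHom_comp_tensorHom]; simp [her, hR10]
    have r3 : (𝟙 A ⊗ₘ ((e ⊗ₘ e) ≫ fmo ≫ r)) ≫ (e ⊗ₘ e) = (e ⊗ₘ (e ⊗ₘ e)) ≫ (𝟙 B ⊗ₘ fmo) := by
      rw [tensorHom_comp_tensorHom, tensorHom_comp_tensorHom]; simp [her, hR10]
    rw [reassoc_of% l3, reassoc_of% r3, reassoc_of% hR6, associator_naturality_assoc]
  · -- left counit
    have g4 : (r ⊗ₘ r) ≫ ((e ≫ fεo) ⊗ₘ 𝟙 A) = (fεo ⊗ₘ 𝟙 B) ≫ (𝟙 (𝟙_ C) ⊗ₘ r) := by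
      rw [tensorHom_comp_tensorHom, tensorHom_comp_tensorHom]; simp [reassoc_of% her, hR13]
    simp only [Category.assoc]
    rw [reassoc_of% g4, id_tensorHom, leftUnitor_naturality, reassoc_of% hR3, hpr, hre]
  · -- right counit
    have g5 : (r ⊗ₘ r) ≫ (𝟙 A ⊗ₘ (e ≫ fεo)) = (𝟙 B ⊗ₘ fεo) ≫ (r ⊗ₘ 𝟙 (𝟙_ C)) := by
      rw [tensorHom_comp_tensorHom, tensorHom_comp_tensorHom]; simp [reassoc_of% her, hR13]
    simp only [Category.assoc]
    rw [reassoc_of% g5, tensorHom_id, rightUnitor_naturality, reassoc_of% hR4, hpr, hre]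
  · -- coassociativity
    have l6 : (r ⊗ₘ r) ≫ ((e ≫ fΔo ≫ (r ⊗ₘ r)) ⊗ₘ 𝟙 A) = (fΔo ⊗ₘ 𝟙 B) ≫ ((r ⊗ₘ r) ⊗ₘ r) := by
      rw [tensorHom_comp_tensorHom, tensorHom_comp_tensorHom]; simp [reassoc_of% her, reassoc_of% hR12]
    have r6 : (r ⊗ₘ r) ≫ (𝟙 A ⊗ₘ (e ≫ fΔo ≫ (r ⊗ₘ r))) = (𝟙 B ⊗ₘ fΔo) ≫ (r ⊗ₘ r ⊗ₘ r) := by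
      rw [tensorHom_comp_tensorHom, tensorHom_comp_tensorHom]; simp [reassoc_of% her, reassoc_of% hR12]
    simp only [Category.assoc]
    rw [l6, reassoc_of% r6, reassoc_of% hR7, associator_inv_naturality]
  · -- Frobenius 1
    have l7 : ((𝟙 A ⊗ₘ r) ⊗ₘ r) ≫ (((e ⊗ₘ e) ≫ fmo ≫ r) ⊗ₘ 𝟙 A) =
        ((e ⊗ₘ 𝟙 B) ⊗ₘ 𝟙 B) ≫ (fmo ⊗ₘ 𝟙 B) ≫ (r ⊗ₘ r) := by
      rw [tensorHom_comp_tensorHom, tensorHom_comp_tensorHom, tensorHom_comp_tensorHom]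
      congr 1
      · have h : (𝟙 A ⊗ₘ r) ≫ (e ⊗ₘ e) = (e ⊗ₘ 𝟙 B) ≫ (𝟙 B ⊗ₘ fpo) := by
          rw [tensorHom_comp_tensorHom, tensorHom_comp_tensorHom]; simp [her]
        rw [reassoc_of% h, reassoc_of% Pm2]
      · simp
    have r7 : (e ⊗ₘ e) ≫ (𝟙 B ⊗ₘ fΔo) = (𝟙 A ⊗ₘ (e ≫ fΔo)) ≫ (e ⊗ₘ 𝟙 (B ⊗ B)) := by
      rw [tensorHom_comp_tensorHom, tensorHom_comp_tensorHom]; simp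
    calc (𝟙 A ⊗ₘ (e ≫ fΔo ≫ (r ⊗ₘ r))) ≫ (α_ A A A).inv ≫ (((e ⊗ₘ e) ≫ fmo ≫ r) ⊗ₘ 𝟙 A)
        = (𝟙 A ⊗ₘ (e ≫ fΔo)) ≫ (𝟙 A ⊗ₘ (r ⊗ₘ r)) ≫ (α_ A A A).inv ≫
            (((e ⊗ₘ e) ≫ fmo ≫ r) ⊗ₘ 𝟙 A) := by simp [← id_tensor_comp]
      _ = (𝟙 A ⊗ₘ (e ≫ fΔo)) ≫ (α_ A B B).inv ≫ ((𝟙 A ⊗ₘ r) ⊗ₘ r) ≫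
            (((e ⊗ₘ e) ≫ fmo ≫ r) ⊗ₘ 𝟙 A) := by rw [associator_inv_naturality_assoc]
      _ = (𝟙 A ⊗ₘ (e ≫ fΔo)) ≫ (α_ A B B).inv ≫ ((e ⊗ₘ 𝟙 B) ⊗ₘ 𝟙 B) ≫
            (fmo ⊗ₘ 𝟙 B) ≫ (r ⊗ₘ r) := by rw [l7]
      _ = (𝟙 A ⊗ₘ (e ≫ fΔo)) ≫ (e ⊗ₘ (𝟙 B ⊗ₘ 𝟙 B)) ≫ (α_ B B B).inv ≫
            (fmo ⊗ₘ 𝟙 B) ≫ (r ⊗ₘ r) := by rw [← associator_inv_naturality_assoc]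
      _ = (e ⊗ₘ e) ≫ (𝟙 B ⊗ₘ fΔo) ≫ (α_ B B B).inv ≫ (fmo ⊗ₘ 𝟙 B) ≫ (r ⊗ₘ r) := by
            rw [reassoc_of% r7]; simp
      _ = (e ⊗ₘ e) ≫ fmo ≫ fΔo ≫ (r ⊗ₘ r) := by rw [reassoc_of% hR8]
      _ = ((e ⊗ₘ e) ≫ fmo ≫ r) ≫ (e ≫ fΔo ≫ (r ⊗ₘ r)) := by
            simp only [Category.assoc]
            rw [reassoc_of% her, reassoc_of% hR12]
  · -- Frobenius 2
    have l8 : (r ⊗ₘ (r ⊗ₘ 𝟙 A)) ≫ (𝟙 A ⊗ₘ ((e ⊗ₘ e) ≫ fmo ≫ r)) =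
        (𝟙 B ⊗ₘ (𝟙 B ⊗ₘ e)) ≫ (𝟙 B ⊗ₘ fmo) ≫ (r ⊗ₘ r) := by
      rw [tensorHom_comp_tensorHom, tensorHom_comp_tensorHom, tensorHom_comp_tensorHom]
      congr 1
      · simp
      · have h : (r ⊗ₘ 𝟙 A) ≫ (e ⊗ₘ e) = (𝟙 B ⊗ₘ e) ≫ (fpo ⊗ₘ 𝟙 B) := by
          rw [tensorHom_comp_tensorHom, tensorHom_comp_tensorHom]; simp [her]
        rw [reassoc_of% h, reassoc_of% Pm1]
    have r8 : (e ⊗ₘ e) ≫ (fΔo ⊗ₘ 𝟙 B) = ((e ≫ fΔo) ⊗ₘ 𝟙 A) ≫ (𝟙 (B ⊗ B) ⊗ₘ e) := by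
      rw [tensorHom_comp_tensorHom, tensorHom_comp_tensorHom]; simp
    calc ((e ≫ fΔo ≫ (r ⊗ₘ r)) ⊗ₘ 𝟙 A) ≫ (α_ A A A).hom ≫ (𝟙 A ⊗ₘ ((e ⊗ₘ e) ≫ fmo ≫ r))
        = ((e ≫ fΔo) ⊗ₘ 𝟙 A) ≫ ((r ⊗ₘ r) ⊗ₘ 𝟙 A) ≫ (α_ A A A).hom ≫
            (𝟙 A ⊗ₘ ((e ⊗ₘ e) ≫ fmo ≫ r)) := by simp [← comp_tensor_id]
      _ = ((e ≫ fΔo) ⊗ₘ 𝟙 A) ≫ (α_ B B A).hom ≫ (r ⊗ₘ (r ⊗ₘ 𝟙 A)) ≫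
            (𝟙 A ⊗ₘ ((e ⊗ₘ e) ≫ fmo ≫ r)) := by rw [associator_naturality_assoc]
      _ = ((e ≫ fΔo) ⊗ₘ 𝟙 A) ≫ (α_ B B A).hom ≫ (𝟙 B ⊗ₘ (𝟙 B ⊗ₘ e)) ≫
            (𝟙 B ⊗ₘ fmo) ≫ (r ⊗ₘ r) := by rw [l8]
      _ = ((e ≫ fΔo) ⊗ₘ 𝟙 A) ≫ ((𝟙 B ⊗ₘ 𝟙 B) ⊗ₘ e) ≫ (α_ B B B).hom ≫
            (𝟙 B ⊗ₘ fmo) ≫ (r ⊗ₘ r) := by rw [← associator_naturality_assoc]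
      _ = (e ⊗ₘ e) ≫ (fΔo ⊗ₘ 𝟙 B) ≫ (α_ B B B).hom ≫ (𝟙 B ⊗ₘ fmo) ≫ (r ⊗ₘ r) := by
            rw [reassoc_of% r8]; simp
      _ = (e ⊗ₘ e) ≫ fmo ≫ fΔo ≫ (r ⊗ₘ r) := by rw [reassoc_of% hR9]
      _ = ((e ⊗ₘ e) ≫ fmo ≫ r) ≫ (e ≫ fΔo ≫ (r ⊗ₘ r)) := by
            simp only [Category.assoc]
            rw [reassoc_of% her, reassoc_of% hR12]
end

section
/- Let A and B be objects of C, let m : A⊗A → A and Δ : A → A⊗A be morphisms satisfying the Frobenius identity (id_A⊗m)∘α_{A,A,A}∘(Δ⊗id_A) = Δ∘m, and let e : A → B, r : B → A be morphisms with r∘e = id_A. Define f_mo := e∘m∘(r⊗r) : B⊗B → B and f_Δo := (e⊗e)∘Δ∘r : B → B⊗B. Then (id_B⊗f_mo)∘α_{B,B,B}∘(f_Δo⊗id_B) = f_Δo∘f_mo; i.e. the induced morphisms satisfy the sewing relation R9. -/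
open CategoryTheory MonoidalCategory

/-- the Frobenius identity
`(id⊗m)∘α∘(Δ⊗id) = Δ∘m` is transported along a retract, giving the sewing
relation R9 for the induced morphisms `f_mo` and `f_Δo` on `B`. -/
theorem induced_relation_R9 {C : Type*} [Category C] [MonoidalCategory C]
    (A B : C) (m : A ⊗ A ⟶ A) (Δ : A ⟶ A ⊗ A)
    (hfrob : (Δ ⊗ₘ 𝟙 A) ≫ (α_ A A A).hom ≫ (𝟙 A ⊗ₘ m) = m ≫ Δ)
    (e : A ⟶ B) (r : B ⟶ A) (hre : e ≫ r = 𝟙 A) :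
    ((r ≫ Δ ≫ (e ⊗ₘ e)) ⊗ₘ 𝟙 B) ≫ (α_ B B B).hom ≫
        (𝟙 B ⊗ₘ ((r ⊗ₘ r) ≫ m ≫ e)) =
      ((r ⊗ₘ r) ≫ m ≫ e) ≫ (r ≫ Δ ≫ (e ⊗ₘ e)) := by
  calc ((r ≫ Δ ≫ (e ⊗ₘ e)) ⊗ₘ 𝟙 B) ≫ (α_ B B B).hom ≫ (𝟙 B ⊗ₘ ((r ⊗ₘ r) ≫ m ≫ e))
      = ((r ≫ Δ) ⊗ₘ 𝟙 B) ≫ ((e ⊗ₘ e) ⊗ₘ 𝟙 B) ≫ (α_ B B B).hom ≫ (𝟙 B ⊗ₘ (r ⊗ₘ r)) ≫ (𝟙 B ⊗ₘ (m ≫ e)) := by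
        simp [comp_tensor_id, id_tensor_comp]
    _ = ((r ≫ Δ) ⊗ₘ 𝟙 B) ≫ (α_ A A B).hom ≫ ((e ⊗ₘ ((e ⊗ₘ 𝟙 B) ≫ (r ⊗ₘ r)))) ≫ (𝟙 B ⊗ₘ (m ≫ e)) := by
        rw [associator_naturality_assoc, tensorHom_comp_tensorHom_assoc]
        simp
    _ = ((r ≫ Δ) ⊗ₘ 𝟙 B) ≫ (α_ A A B).hom ≫ (𝟙 A ⊗ₘ (𝟙 A ⊗ₘ r)) ≫ (𝟙 A ⊗ₘ m) ≫ (e ⊗ₘ e) := by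
        simp only [tensorHom_comp_tensorHom_assoc, tensorHom_comp_tensorHom, hre, Category.id_comp, Category.comp_id]
    _ = (r ⊗ₘ r) ≫ (Δ ⊗ₘ 𝟙 A) ≫ (α_ A A A).hom ≫ (𝟙 A ⊗ₘ m) ≫ (e ⊗ₘ e) := by
        rw [← associator_naturality_assoc, tensorHom_comp_tensorHom_assoc, tensorHom_comp_tensorHom_assoc]
        simp
    _ = ((r ⊗ₘ r) ≫ m ≫ e) ≫ (r ≫ Δ ≫ (e ⊗ₘ e)) := by
        rw [reassoc_of% hfrob]
        simp [reassoc_of% hre]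
end

section
/- Let A and B be objects of C, let Δ : A → A⊗A be a morphism satisfying coassociativity (Δ⊗id_A)∘Δ = α⁻¹_{A,A,A}∘(id_A⊗Δ)∘Δ, and let e : A → B, r : B → A be morphisms with r∘e = id_A. Define f_Δo := (e⊗e)∘Δ∘r : B → B⊗B. Then (f_Δo⊗id_B)∘f_Δo = α⁻¹_{B,B,B}∘(id_B⊗f_Δo)∘f_Δo; i.e. the induced comultiplication on B satisfies the sewing relation R7. -/
open CategoryTheory MonoidalCategory

/-- coassociativity of `Δ` on `A` is transported along a retract,
giving the sewing relation R7 for the induced comultiplication on `B`. -/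
theorem induced_relation_R7 {C : Type*} [Category C] [MonoidalCategory C]
    (A B : C) (Δ : A ⟶ A ⊗ A)
    (hcoassoc : Δ ≫ (Δ ⊗ₘ 𝟙 A) = Δ ≫ (𝟙 A ⊗ₘ Δ) ≫ (α_ A A A).inv)
    (e : A ⟶ B) (r : B ⟶ A) (hre : e ≫ r = 𝟙 A) :
    (r ≫ Δ ≫ (e ⊗ₘ e)) ≫ ((r ≫ Δ ≫ (e ⊗ₘ e)) ⊗ₘ 𝟙 B) =
      (r ≫ Δ ≫ (e ⊗ₘ e)) ≫ (𝟙 B ⊗ₘ (r ≫ Δ ≫ (e ⊗ₘ e))) ≫ (α_ B B B).inv := by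
  have h1 : (e ⊗ₘ e) ≫ ((r ≫ Δ ≫ (e ⊗ₘ e)) ⊗ₘ 𝟙 B) = (Δ ⊗ₘ 𝟙 A) ≫ ((e ⊗ₘ e) ⊗ₘ e) := by
    rw [tensorHom_comp_tensorHom, tensorHom_comp_tensorHom]; simp [reassoc_of% hre]
  have h2 : (e ⊗ₘ e) ≫ (𝟙 B ⊗ₘ (r ≫ Δ ≫ (e ⊗ₘ e))) = (𝟙 A ⊗ₘ Δ) ≫ (e ⊗ₘ (e ⊗ₘ e)) := by
    rw [tensorHom_comp_tensorHom, tensorHom_comp_tensorHom]; simp [reassoc_of% hre]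
  calc (r ≫ Δ ≫ (e ⊗ₘ e)) ≫ ((r ≫ Δ ≫ (e ⊗ₘ e)) ⊗ₘ 𝟙 B)
      = r ≫ (Δ ≫ (Δ ⊗ₘ 𝟙 A)) ≫ ((e ⊗ₘ e) ⊗ₘ e) := by
        simp only [Category.assoc, h1]
    _ = r ≫ (Δ ≫ (𝟙 A ⊗ₘ Δ) ≫ (α_ A A A).inv) ≫ ((e ⊗ₘ e) ⊗ₘ e) := by rw [hcoassoc]
    _ = r ≫ Δ ≫ (𝟙 A ⊗ₘ Δ) ≫ (e ⊗ₘ (e ⊗ₘ e)) ≫ (α_ B B B).inv := by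
        simp only [Category.assoc, ← associator_inv_naturality]
    _ = (r ≫ Δ ≫ (e ⊗ₘ e)) ≫ (𝟙 B ⊗ₘ (r ≫ Δ ≫ (e ⊗ₘ e))) ≫ (α_ B B B).inv := by
        simp only [Category.assoc, reassoc_of% h2]
end
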